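/- arXiv:2210.11595 — 2 statements merged into one kernel-verified Lean document; each statement's English description precedes it below -/
import Mathlib

section
/- Let G_I(t) be continuous matrix-valued functions indexed by nonempty finite multisets I over {0,...,r-1}, and define the multivariable Dyson term D_I(t) = Σ_{m=1}^{|I|} Σ_{(I_1,...,I_m) ∈ P_m(I)} ∫_0^t dt_1 ∫_0^{t_1} dt_2 ... ∫_0^{t_{m-1}} dt_m G_{I_1}(t_1)···G_{I_m}(t_m). Then D_I satisfies the integral recursion D_I(t) = ∫_0^t G_I(s) ds + Σ_{J ⊊ I, J nonempty} ∫_0^t G_J(s) D_{I\J}(s) ds. -/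
open MeasureTheory intervalIntegral

attribute [local instance] Matrix.linftyOpNormedRing Matrix.linftyOpNormedAlgebra

/-- The iterated simplex integral
`∫_0^t dt₁ ∫_0^{t₁} dt₂ ⋯ ∫_0^{t_{k-1}} dt_k G₁(t₁) ⋯ G_k(t_k)` associated to a list
`[G₁, ..., G_k]` of matrix-valued functions, defined recursively. -/
noncomputable def simplexIntegral {d : ℕ} :
    List (ℝ → Matrix (Fin d) (Fin d) ℂ) → ℝ → Matrix (Fin d) (Fin d) ℂ
  | [], _ => 1
  | G :: rest, t => ∫ s in (0:ℝ)..t, G s * simplexIntegral rest s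

/-- The set of ordered partitions of the multiset `I` into `m` nonempty submultisets. -/
noncomputable def orderedPartitions {ι : Type*} [DecidableEq ι] (I : Multiset ι) (m : ℕ) :
    Finset (Fin m → Multiset ι) :=
  (Fintype.piFinset fun _ : Fin m => I.powerset.toFinset).filter
    fun f => (∀ j, f j ≠ 0) ∧ ∑ j, f j = I

/-- The multivariable Dyson term
`D_I(t) = Σ_{m=1}^{|I|} Σ_{(I_1,...,I_m) ∈ P_m(I)}
  ∫_0^t dt₁ ⋯ ∫_0^{t_{m-1}} dt_m G_{I_1}(t₁) ⋯ G_{I_m}(t_m)`. -/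
noncomputable def dysonTerm {ι : Type*} [DecidableEq ι] {d : ℕ}
    (G : Multiset ι → ℝ → Matrix (Fin d) (Fin d) ℂ) (I : Multiset ι) (t : ℝ) :
    Matrix (Fin d) (Fin d) ℂ :=
  ∑ m ∈ Finset.Icc 1 (Multiset.card I), ∑ f ∈ orderedPartitions I m,
    simplexIntegral (List.ofFn fun j => G (f j)) t

lemma simplexIntegral_continuous {d : ℕ} (L : List (ℝ → Matrix (Fin d) (Fin d) ℂ))
    (hL : ∀ g ∈ L, Continuous g) : Continuous (simplexIntegral L) := by
  induction L with
  | nil => exact continuous_const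
  | cons g rest ih =>
    have hg : Continuous g := hL g (by simp)
    have hrest : Continuous (simplexIntegral rest) := ih fun g hg => hL g (by simp [hg])
    have hmul : Continuous fun s => g s * simplexIntegral rest s := hg.mul hrest
    exact intervalIntegral.continuous_primitive (fun a b => hmul.intervalIntegrable a b) 0

lemma mem_orderedPartitions {ι : Type*} [DecidableEq ι] {I : Multiset ι} {m : ℕ}
    {f : Fin m → Multiset ι} :
    f ∈ orderedPartitions I m ↔ (∀ j, f j ≤ I) ∧ (∀ j, f j ≠ 0) ∧ ∑ j, f j = I := by
  simp [orderedPartitions, Fintype.mem_piFinset, Multiset.mem_powerset, and_assoc]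

lemma orderedPartitions_eq_empty {ι : Type*} [DecidableEq ι] {I : Multiset ι} {m : ℕ}
    (h : Multiset.card I < m) : orderedPartitions I m = ∅ := by
  rw [Finset.eq_empty_iff_forall_notMem]
  intro f hf
  rw [mem_orderedPartitions] at hf
  obtain ⟨-, hne, hsum⟩ := hf
  have : (m : ℕ) ≤ Multiset.card I := by
    calc m = ∑ j : Fin m, 1 := by simp
    _ ≤ ∑ j : Fin m, Multiset.card (f j) := by
        apply Finset.sum_le_sum
        intro j _
        exact Nat.one_le_iff_ne_zero.2 (by simpa [Multiset.card_eq_zero] using hne j)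
    _ = Multiset.card I := by rw [← hsum]; simp
  omega

lemma orderedPartitions_one {ι : Type*} [DecidableEq ι] {I : Multiset ι} (hI : I ≠ 0) :
    orderedPartitions I 1 = {fun _ => I} := by
  ext f
  rw [mem_orderedPartitions, Finset.mem_singleton]
  constructor
  · rintro ⟨-, -, hsum⟩
    funext j
    have := Subsingleton.elim j 0
    subst this
    simpa using hsum
  · rintro rfl
    exact ⟨fun j => le_rfl, fun j => hI, by simp⟩

/-- The multivariable Dyson terms satisfy the integral recursion
`D_I(t) = ∫_0^t G_I(s) ds + Σ_{J ⊊ I, J ≠ ∅} ∫_0^t G_J(s) D_{I∖J}(s) ds`. -/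
theorem stmt9 {ι : Type*} [DecidableEq ι] {d : ℕ}
    (G : Multiset ι → ℝ → Matrix (Fin d) (Fin d) ℂ)
    (hG : ∀ J, Continuous (G J)) (I : Multiset ι) (hI : I ≠ 0) (t : ℝ) :
    dysonTerm G I t = (∫ s in (0:ℝ)..t, G I s) +
      ∑ J ∈ I.powerset.toFinset.filter (fun J => J ≠ 0 ∧ J ≠ I),
        ∫ s in (0:ℝ)..t, G J s * dysonTerm G (I - J) s := by
    classical
  set n := Multiset.card I with hn
  have hn1 : 1 ≤ n := Multiset.card_pos.2 hI
  -- continuity of simplex integrals over partitions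
  have hcont : ∀ (m : ℕ) (f : Fin m → Multiset ι),
      Continuous (simplexIntegral (List.ofFn fun j => G (f j))) := by
    intro m f
    apply simplexIntegral_continuous
    intro g hg
    rw [List.mem_ofFn] at hg
    obtain ⟨j, rfl⟩ := hg
    exact hG _
  -- RHS rewrite: the J-th summand equals a double sum of simplex integrals
  have hRHS : ∀ J ∈ I.powerset.toFinset.filter (fun J => J ≠ 0 ∧ J ≠ I),
      (∫ s in (0:ℝ)..t, G J s * dysonTerm G (I - J) s) =
      ∑ m' ∈ Finset.Icc 1 (n - 1), ∑ g ∈ orderedPartitions (I - J) m',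
        ∫ s in (0:ℝ)..t, G J s * simplexIntegral (List.ofFn fun j => G (g j)) s := by
    intro J hJ
    simp only [Finset.mem_filter, Multiset.mem_toFinset, Multiset.mem_powerset] at hJ
    obtain ⟨hJI, hJ0, hJne⟩ := hJ
    have hcard : Multiset.card (I - J) ≤ n - 1 := by
      have h1 : Multiset.card (I - J) = n - Multiset.card J := by
        rw [Multiset.card_sub hJI]
      have h2 : 1 ≤ Multiset.card J := Multiset.card_pos.2 hJ0
      omega
    have hext : dysonTerm G (I - J) = fun s => ∑ m' ∈ Finset.Icc 1 (n - 1),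
        ∑ g ∈ orderedPartitions (I - J) m',
          simplexIntegral (List.ofFn fun j => G (g j)) s := by
      funext s
      rw [dysonTerm]
      apply Finset.sum_subset
      · apply Finset.Icc_subset_Icc_right hcard
      · intro m' _ hm'
        have : Multiset.card (I - J) < m' := by
          simp only [Finset.mem_Icc, not_and, not_le] at hm' ⊢
          rcases Nat.lt_or_ge m' 1 with h | h
          · interval_cases m' <;> simp_all [Finset.mem_Icc]
          · exact hm' h
        rw [orderedPartitions_eq_empty this]
        simp
    rw [hext]
    have : (fun s => G J s * ∑ m' ∈ Finset.Icc 1 (n - 1),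
        ∑ g ∈ orderedPartitions (I - J) m',
          simplexIntegral (List.ofFn fun j => G (g j)) s) =
        fun s => ∑ m' ∈ Finset.Icc 1 (n - 1), ∑ g ∈ orderedPartitions (I - J) m',
          G J s * simplexIntegral (List.ofFn fun j => G (g j)) s := by
      funext s
      rw [Finset.mul_sum]
      congr 1
      funext m'
      rw [Finset.mul_sum]
    rw [this, intervalIntegral.integral_finset_sum]
    · congr 1
      funext m'
      rw [intervalIntegral.integral_finset_sum]
      intro g _
      exact ((hG J).mul (hcont _ g)).intervalIntegrable 0 t
    · intro m' _
      apply (Continuous.intervalIntegrable ?_ 0 t)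
      exact continuous_finset_sum _ fun g _ => (hG J).mul (hcont _ g)
  rw [Finset.sum_congr rfl hRHS, Finset.sum_comm]
  -- split off the m = 1 term on the LHS
  have hsplit : Finset.Icc 1 n = insert 1 (Finset.Icc 2 n) := by
    ext m
    simp only [Finset.mem_Icc, Finset.mem_insert]
    omega
  rw [dysonTerm, ← hn, hsplit, Finset.sum_insert (by simp [Finset.mem_Icc])]
  rw [orderedPartitions_one hI, Finset.sum_singleton]
  have h1 : simplexIntegral (List.ofFn fun _ : Fin 1 => G I) t = ∫ s in (0:ℝ)..t, G I s := by
    simp [simplexIntegral, List.ofFn_succ, List.ofFn_zero]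
  rw [h1]
  congr 1
  -- reindex m = m' + 1
  have hIcc : Finset.Icc 2 n = (Finset.Icc 1 (n - 1)).map (addRightEmbedding 1) := by
    rw [Finset.map_add_right_Icc]
    congr 1
    omega
  rw [hIcc, Finset.sum_map]
  apply Finset.sum_congr rfl
  intro m' hm'
  have hm'1 : 1 ≤ m' := (Finset.mem_Icc.1 hm').1
  simp only [addRightEmbedding_apply]
  change ∑ f ∈ orderedPartitions I (m' + 1), _ = _
  rw [Finset.sum_sigma']
  -- the bijection f ↦ (f 0, Fin.tail f)
  refine Finset.sum_nbij' (fun f => ⟨f 0, Fin.tail f⟩)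
    (fun p => Fin.cons p.1 p.2) ?_ ?_ ?_ ?_ ?_
  · intro f hf
    rw [mem_orderedPartitions] at hf
    obtain ⟨hle, hne, hsum⟩ := hf
    rw [Fin.sum_univ_succ] at hsum
    have htail : ∑ j : Fin m', f j.succ = I - f 0 :=
      eq_tsub_of_add_eq (by rw [add_comm]; exact hsum)
    have hmem : ∀ j : Fin m', f j.succ ≤ I - f 0 := by
      intro j
      rw [← htail]
      exact Finset.single_le_sum (fun i _ => Multiset.zero_le _) (Finset.mem_univ j)
    refine Finset.mem_sigma.2 ⟨?_, ?_⟩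
    · simp only [Finset.mem_filter, Multiset.mem_toFinset, Multiset.mem_powerset]
      refine ⟨hle 0, hne 0, ?_⟩
      intro h0
      have hz : (I : Multiset ι) - f 0 = 0 := by rw [h0]; simp
      have : f (⟨0, hm'1⟩ : Fin m').succ = 0 :=
        le_antisymm (by rw [← hz]; exact hmem _) (Multiset.zero_le _)
      exact hne _ this
    · rw [mem_orderedPartitions]
      exact ⟨hmem, fun j => hne _, htail⟩
  · intro p hp
    rw [Finset.mem_sigma] at hp
    obtain ⟨hp1, hp2⟩ := hp
    simp only [Finset.mem_filter, Multiset.mem_toFinset, Multiset.mem_powerset] at hp1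
    rw [mem_orderedPartitions] at hp2 ⊢
    obtain ⟨hle2, hne2, hsum2⟩ := hp2
    refine ⟨?_, ?_, ?_⟩
    · intro j
      refine Fin.cases ?_ ?_ j
      · simpa using hp1.1
      · intro i
        simpa using (hle2 i).trans (Multiset.sub_le_self _ _)
    · intro j
      refine Fin.cases ?_ ?_ j
      · simpa using hp1.2.1
      · intro i
        simpa using hne2 i
    · rw [Fin.sum_univ_succ]
      simp only [Fin.cons_zero, Fin.cons_succ]
      rw [hsum2]
      exact add_tsub_cancel_of_le hp1.1
  · intro f _
    exact Fin.cons_self_tail f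
  · intro p _
    exact Sigma.ext (by simp) (by simp [Fin.tail_cons])
  · intro f _
    rw [List.ofFn_succ]
    rfl
end

section
/- Let G : ℝ → M_d(ℂ) be continuous and let c be a scalar. If U_c(t) solves U' = c G(t) U, U(0) = Id, then the k-th derivative of U_c(t) with respect to c at c = 0, divided by k!, equals the k-th Dyson term D_k(t) = ∫_0^t dt_1 ∫_0^{t_1} dt_2 ... ∫_0^{t_{k-1}} dt_k G(t_1)···G(t_k). In particular, D_1(t) = ∫_0^t G(s) ds and D_k satisfies D_k'(t) = G(t) D_{k-1}(t), D_k(0) = 0. -/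
open MeasureTheory intervalIntegral
open scoped NNReal ENNReal

attribute [local instance] Matrix.linftyOpNormedRing Matrix.linftyOpNormedAlgebra

namespace Stmt16Aux

variable {d : ℕ}

theorem simplexIntegral_nil (t : ℝ) :
    simplexIntegral ([] : List (ℝ → Matrix (Fin d) (Fin d) ℂ)) t = 1 := rfl

theorem simplexIntegral_cons (f : ℝ → Matrix (Fin d) (Fin d) ℂ)
    (rest : List (ℝ → Matrix (Fin d) (Fin d) ℂ)) (t : ℝ) :
    simplexIntegral (f :: rest) t = ∫ s in (0:ℝ)..t, f s * simplexIntegral rest s := rfl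

theorem simplexIntegral_cons_fun (f : ℝ → Matrix (Fin d) (Fin d) ℂ)
    (rest : List (ℝ → Matrix (Fin d) (Fin d) ℂ)) :
    simplexIntegral (f :: rest) = fun t => ∫ s in (0:ℝ)..t, f s * simplexIntegral rest s := rfl

variable {G : ℝ → Matrix (Fin d) (Fin d) ℂ}

theorem simplex_cont_deriv (hG : Continuous G) (k : ℕ) :
    Continuous (simplexIntegral (List.replicate k G)) ∧
      ∀ t, HasDerivAt (simplexIntegral (List.replicate (k + 1) G))
        (G t * simplexIntegral (List.replicate k G) t) t := by
  induction k with
  | zero =>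
    constructor
    · have : (simplexIntegral (List.replicate 0 G) : ℝ → Matrix (Fin d) (Fin d) ℂ)
          = fun _ => 1 := by
        funext t; exact simplexIntegral_nil t
      rw [this]; exact continuous_const
    · intro t
      have hc : Continuous fun s : ℝ =>
          G s * simplexIntegral ([] : List (ℝ → Matrix (Fin d) (Fin d) ℂ)) s := by
        simpa [simplexIntegral_nil] using hG
      rw [List.replicate_succ, simplexIntegral_cons_fun]
      exact (hc.integral_hasStrictDerivAt 0 t).hasDerivAt
  | succ k ih =>
    have hk1 : Continuous (simplexIntegral (List.replicate (k + 1) G)) :=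
      continuous_iff_continuousAt.2 fun t => (ih.2 t).continuousAt
    refine ⟨hk1, fun t => ?_⟩
    have hc : Continuous fun s : ℝ => G s * simplexIntegral (List.replicate (k + 1) G) s :=
      hG.mul hk1
    rw [List.replicate_succ (n := k + 1), simplexIntegral_cons_fun]
    exact (hc.integral_hasStrictDerivAt 0 t).hasDerivAt

theorem norm_one_le_one : ‖(1 : Matrix (Fin d) (Fin d) ℂ)‖ ≤ 1 := by
  rcases Nat.eq_zero_or_pos d with hd | hd
  · subst hd
    have : (1 : Matrix (Fin 0) (Fin 0) ℂ) = 0 := by ext i j; exact i.elim0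
    rw [this, norm_zero]; norm_num
  · haveI : Nonempty (Fin d) := ⟨⟨0, hd⟩⟩
    exact le_of_eq norm_one

theorem simplex_bound {M R : ℝ} (hM0 : 0 ≤ M)
    (hM : ∀ s ∈ Set.Icc (-R) R, ‖G s‖ ≤ M) (k : ℕ) :
    ∀ t : ℝ, |t| ≤ R → ‖simplexIntegral (List.replicate k G) t‖ ≤ (M * R) ^ k := by
  induction k with
  | zero =>
    intro t _
    rw [pow_zero]
    exact norm_one_le_one
  | succ k ih =>
    intro t ht
    have habs : ∀ x ∈ Set.uIoc (0:ℝ) t, -R ≤ x ∧ x ≤ R := by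
      intro x hx
      rcases Set.mem_uIoc.mp hx with ⟨h1, h2⟩ | ⟨h1, h2⟩ <;>
        constructor <;> linarith [le_abs_self t, neg_abs_le t, abs_nonneg t]
    have hb : ∀ x ∈ Set.uIoc (0:ℝ) t,
        ‖G x * simplexIntegral (List.replicate k G) x‖ ≤ M * (M * R) ^ k := by
      intro x hx
      obtain ⟨hx1, hx2⟩ := habs x hx
      refine (norm_mul_le _ _).trans ?_
      exact mul_le_mul (hM x ⟨hx1, hx2⟩) (ih x (abs_le.mpr ⟨hx1, hx2⟩)) (norm_nonneg _) hM0
    rw [List.replicate_succ, simplexIntegral_cons]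
    have hR0 : 0 ≤ R := le_trans (abs_nonneg t) ht
    calc ‖∫ s in (0:ℝ)..t, G s * simplexIntegral (List.replicate k G) s‖
        ≤ (M * (M * R) ^ k) * |t - 0| := intervalIntegral.norm_integral_le_of_norm_le_const hb
      _ = (M * (M * R) ^ k) * |t| := by rw [sub_zero]
      _ ≤ (M * (M * R) ^ k) * R := by
          refine mul_le_mul_of_nonneg_left ht ?_
          positivity
      _ = (M * R) ^ (k + 1) := by ring


set_option maxHeartbeats 2000000 in
theorem key (hG : Continuous G)
    (U : ℝ → ℝ → Matrix (Fin d) (Fin d) ℂ)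
    (hU : ∀ c t, HasDerivAt (U c) ((c • G t) * U c t) t)
    (hU0 : ∀ c, U c 0 = 1) (t₀ : ℝ) (k : ℕ) :
    iteratedDeriv k (fun c => U c t₀) 0
      = (k.factorial : ℝ) • simplexIntegral (List.replicate k G) t₀ := by
  classical
  set S : ℕ → ℝ → Matrix (Fin d) (Fin d) ℂ :=
    fun n => simplexIntegral (List.replicate n G) with hS
  set R : ℝ := |t₀| + 1 with hR
  have hR0 : 0 < R := by positivity
  have ht0R : |t₀| ≤ R := by rw [hR]; linarith
  obtain ⟨C, hC⟩ : ∃ C, ∀ x ∈ Set.Icc (-R) R, ‖G x‖ ≤ C :=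
    (isCompact_Icc).exists_bound_of_continuousOn hG.continuousOn
  set M : ℝ := max C 0 with hM
  have hM0 : 0 ≤ M := le_max_right _ _
  have hMb : ∀ x ∈ Set.Icc (-R) R, ‖G x‖ ≤ M := fun x hx => (hC x hx).trans (le_max_left _ _)
  have hSb : ∀ n, ∀ t : ℝ, |t| ≤ R → ‖S n t‖ ≤ (M * R) ^ n :=
    fun n => Stmt16Aux.simplex_bound hM0 hMb n
  set q : ℝ := M * R with hq
  have hq0 : 0 ≤ q := by positivity
  set p : @FormalMultilinearSeries ℝ ℝ (Matrix (Fin d) (Fin d) ℂ) _ _ _ _ _ _ _ _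
      PseudoMetricSpace.toUniformSpace.toTopologicalSpace _ _ :=
    fun n => ContinuousMultilinearMap.mkPiRing ℝ (Fin n) (S n t₀) with hp
  set r : ℝ≥0 := ⟨(q + 1)⁻¹, by positivity⟩ with hr
  have hrq : (r : ℝ) = (q + 1)⁻¹ := rfl
  have hpn : ∀ n, ‖p n‖ = ‖S n t₀‖ := fun n => ContinuousMultilinearMap.norm_mkPiRing _
  have hradius : (r : ℝ≥0∞) ≤ p.radius := by
    apply p.le_radius_of_bound 1
    intro n
    have h1 : ‖p n‖ ≤ q ^ n := by rw [hpn]; exact hSb n t₀ ht0R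
    have h2 : (0:ℝ) ≤ ((q + 1)⁻¹) ^ n := by positivity
    calc ‖p n‖ * (r : ℝ) ^ n ≤ q ^ n * ((q + 1)⁻¹) ^ n := by
          rw [hrq]; exact mul_le_mul_of_nonneg_right h1 h2
      _ = (q * (q + 1)⁻¹) ^ n := (mul_pow q ((q + 1)⁻¹) n).symm
      _ ≤ 1 := by
          apply pow_le_one₀ (by positivity)
          rw [← div_eq_mul_inv, div_le_one (by positivity)]
          linarith
  have hball : HasFPowerSeriesOnBall (fun c => U c t₀) p 0 r := by
    refine ⟨hradius, ?_, ?_⟩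
    · rw [show ((0:ℝ≥0∞) = ((0:ℝ≥0):ℝ≥0∞)) from rfl, ENNReal.coe_lt_coe]
      rw [← NNReal.coe_lt_coe, hrq]
      positivity
    · intro y hy
      rw [zero_add]
      have hy0 : (‖y‖₊ : ℝ≥0∞) < r := mem_emetric_ball_zero_iff.mp hy
      have hy' : |y| < (q + 1)⁻¹ := by
        rw [← hrq, ← Real.norm_eq_abs, ← coe_nnnorm]
        exact_mod_cast hy0
      have hq1 : (0:ℝ) < q + 1 := by positivity
      have hyq : |y| * q < 1 := by
        have h := mul_lt_mul_of_pos_right hy' hq1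
        rw [inv_mul_cancel₀ (ne_of_gt hq1)] at h
        nlinarith [abs_nonneg y]
      have hu : Summable (fun n : ℕ => |y| ^ (n + 1) * (M * q ^ n)) := by
        have h0 : Summable (fun n : ℕ => (|y| * q) ^ n) :=
          summable_geometric_of_lt_one (by positivity) hyq
        refine (h0.mul_left (|y| * M)).congr ?_
        intro n
        rw [mul_pow]
        ring
      set W : ℝ → Matrix (Fin d) (Fin d) ℂ := fun t => 1 + ∑' n, y ^ (n + 1) • S (n + 1) t
        with hW
      have hSzero : ∀ n : ℕ, S (n + 1) (0:ℝ) = 0 := by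
        intro n
        show simplexIntegral (List.replicate (n + 1) G) (0:ℝ) = 0
        rw [List.replicate_succ, Stmt16Aux.simplexIntegral_cons, intervalIntegral.integral_same]
      have hg' : ∀ (n : ℕ) (x : ℝ), x ∈ Set.Ioo (-R) R →
          ‖y ^ (n + 1) • (G x * S n x)‖ ≤ |y| ^ (n + 1) * (M * q ^ n) := by
        intro n x hx
        rw [norm_smul, Real.norm_eq_abs, abs_pow]
        refine mul_le_mul_of_nonneg_left ?_ (by positivity)
        refine (norm_mul_le _ _).trans ?_
        exact mul_le_mul (hMb x ⟨hx.1.le, hx.2.le⟩)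
          (hSb n x (abs_le.mpr ⟨hx.1.le, hx.2.le⟩)) (norm_nonneg _) hM0
      have hWd : ∀ t ∈ Set.Ioo (-R) R,
          HasDerivAt W (∑' n, y ^ (n + 1) • (G t * S n t)) t := by
        intro t ht
        have hg : ∀ (n : ℕ) (x : ℝ), x ∈ Set.Ioo (-R) R →
            HasDerivAt (fun u => y ^ (n + 1) • S (n + 1) u) (y ^ (n + 1) • (G x * S n x)) x :=
          fun n x _ => ((Stmt16Aux.simplex_cont_deriv hG n).2 x).const_smul (y ^ (n + 1))
        have h0 : Summable fun n : ℕ => y ^ (n + 1) • S (n + 1) (0:ℝ) :=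
          summable_zero.congr fun n => by rw [hSzero n, smul_zero]
        have h0mem : (0:ℝ) ∈ Set.Ioo (-R) R := ⟨by linarith, hR0⟩
        exact (hasDerivAt_tsum_of_isPreconnected hu isOpen_Ioo
          (convex_Ioo _ _).isPreconnected hg hg' h0mem h0 ht).const_add 1
      have hsum : ∀ t : ℝ, |t| ≤ R → Summable (fun n : ℕ => y ^ (n + 1) • S (n + 1) t) := by
        intro t ht
        have h0 : Summable (fun n : ℕ => (|y| * q) ^ (n + 1)) := by
          refine ((summable_geometric_of_lt_one (by positivity) hyq).mul_left (|y| * q)).congr ?_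
          intro n
          rw [pow_succ]
          ring
        refine Summable.of_norm_bounded h0 ?_
        intro n
        rw [norm_smul, Real.norm_eq_abs, abs_pow, mul_pow]
        exact mul_le_mul_of_nonneg_left (hSb (n+1) t ht) (by positivity)
      have hsum1 : ∀ t ∈ Set.Ioo (-R) R,
          Summable (fun n : ℕ => y ^ (n + 1) • (G t * S n t)) := fun t ht =>
        Summable.of_norm_bounded hu (fun n => hg' n t ht)
      have hWode : ∀ t ∈ Set.Ioo (-R) R, HasDerivAt W ((y • G t) * W t) t := by
        intro t ht
        have htabs : |t| ≤ R := abs_le.mpr ⟨ht.1.le, ht.2.le⟩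
        have hT : Summable (fun n : ℕ => y ^ (n + 1) • S (n + 1) t) := hsum t htabs
        have hkey : (∑' n, y ^ (n + 1) • (G t * S n t)) = (y • G t) * W t := by
          rw [Summable.tsum_eq_zero_add (hsum1 t ht)]
          have e1 : (y • G t) * W t = y • (G t * W t) := smul_mul_assoc y (G t) (W t)
          rw [e1]
          have e2 : W t = 1 + ∑' n, y ^ (n + 1) • S (n + 1) t := rfl
          rw [e2, mul_add, mul_one]
          rw [← Summable.tsum_mul_left (G t) hT]
          rw [smul_add]
          have hTm : Summable (fun n : ℕ => G t * (y ^ (n + 1) • S (n + 1) t)) := hT.mul_left _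
          rw [← Summable.tsum_const_smul y hTm]
          congr 1
          · rw [zero_add, pow_one]
            have e3 : S 0 t = 1 := rfl
            rw [e3, mul_one]
          · refine tsum_congr fun n => ?_
            rw [mul_smul_comm, smul_smul, ← pow_succ']
        exact hkey ▸ hWd t ht
      have hW0 : W 0 = 1 := by
        have h : (∑' n : ℕ, y ^ (n + 1) • S (n + 1) (0:ℝ))
            = ∑' _ : ℕ, (0 : Matrix (Fin d) (Fin d) ℂ) :=
          tsum_congr fun n => by rw [hSzero n, smul_zero]
        have e : W 0 = 1 + ∑' n : ℕ, y ^ (n + 1) • S (n + 1) (0:ℝ) := rfl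
        rw [e, h, tsum_zero, add_zero]
      set av : ℝ := -(|t₀| + 2⁻¹) with ha
      set bv : ℝ := |t₀| + 2⁻¹ with hb
      have h05 : (0:ℝ) < 2⁻¹ := by norm_num
      have hsub : Set.Icc av bv ⊆ Set.Ioo (-R) R := by
        intro x hx
        obtain ⟨h1, h2⟩ := hx
        rw [ha, hb] at h1
        rw [hb] at h2
        constructor
        · rw [hR]; linarith
        · rw [hR]; linarith
      have hUcont : ContinuousOn (U y) (Set.Icc av bv) :=
        (continuous_iff_continuousAt.2 fun t => (hU y t).continuousAt).continuousOn
      have hWcont : ContinuousOn W (Set.Icc av bv) := fun x hx =>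
        ((hWode x (hsub hx)).continuousAt).continuousWithinAt
      set Gc : ℝ → Matrix (Fin d) (Fin d) ℂ := fun t => G (max (-R) (min t R)) with hGc
      have hGcb : ∀ t : ℝ, ‖Gc t‖ ≤ M := fun t =>
        hMb _ ⟨le_max_left _ _, max_le (by linarith) (min_le_right _ _)⟩
      have hGcEq : ∀ t ∈ Set.Icc (-R) R, Gc t = G t := by
        intro t ht
        show G (max (-R) (min t R)) = G t
        rw [min_eq_left ht.2, max_eq_right ht.1]
      set K : ℝ≥0 := (|y| * M).toNNReal with hK
      have hlip : ∀ t : ℝ, LipschitzOnWith K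
          (fun x : Matrix (Fin d) (Fin d) ℂ => (y • Gc t) * x) Set.univ := by
        intro t
        refine LipschitzWith.lipschitzOnWith ?_
        refine LipschitzWith.of_dist_le_mul fun x₁ x₂ => ?_
        rw [dist_eq_norm, dist_eq_norm, ← mul_sub]
        calc ‖(y • Gc t) * (x₁ - x₂)‖ ≤ ‖y • Gc t‖ * ‖x₁ - x₂‖ := norm_mul_le _ _
          _ ≤ (K : ℝ) * ‖x₁ - x₂‖ := by
              refine mul_le_mul_of_nonneg_right ?_ (norm_nonneg _)
              rw [hK, Real.coe_toNNReal _ (by positivity), norm_smul, Real.norm_eq_abs]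
              exact mul_le_mul_of_nonneg_left (hGcb t) (abs_nonneg y)
      have h0ab : (0:ℝ) ∈ Set.Ioo av bv := by
        constructor
        · rw [ha, hb]; linarith [abs_nonneg t₀]
        · rw [hb]; linarith [abs_nonneg t₀]
      have hmemIcc : ∀ t ∈ Set.Ioo av bv, t ∈ Set.Icc (-R) R := by
        intro t ht
        have h := hsub (Set.Ioo_subset_Icc_self ht)
        exact ⟨h.1.le, h.2.le⟩
      have huniq := ODE_solution_unique_of_mem_Icc
        (v := fun t (x : Matrix (Fin d) (Fin d) ℂ) => (y • Gc t) * x)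
        (s := fun _ => (Set.univ : Set (Matrix (Fin d) (Fin d) ℂ))) (K := K)
        (fun t _ => hlip t) h0ab hUcont
        (fun t ht => by
          have h := hU y t
          rw [← hGcEq t (hmemIcc t ht)] at h
          exact h)
        (fun t _ => Set.mem_univ _)
        hWcont
        (fun t ht => by
          have h := hWode t (hsub (Set.Ioo_subset_Icc_self ht))
          rw [← hGcEq t (hmemIcc t ht)] at h
          exact h)
        (fun t _ => Set.mem_univ _)
        (by rw [hU0 y, hW0])
      have ht₀ab : t₀ ∈ Set.Icc av bv := by
        constructor
        · rw [ha, hb]; linarith [neg_abs_le t₀]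
        · rw [hb]; linarith [le_abs_self t₀]
      have hEq : U y t₀ = W t₀ := huniq ht₀ab
      have hT0 : Summable (fun n : ℕ => y ^ (n + 1) • S (n + 1) t₀) := hsum t₀ ht0R
      have h3 := (hasSum_nat_add_iff (f := fun n : ℕ => y ^ n • S n t₀) 1).mp hT0.hasSum
      have h4 : HasSum (fun n : ℕ => y ^ n • S n t₀) (U y t₀) := by
        rw [hEq]
        have e : W t₀ = 1 + ∑' n : ℕ, y ^ (n + 1) • S (n + 1) t₀ := rfl
        rw [e]
        convert h3 using 1
        case e'_3 => rfl
        rw [Finset.range_one, Finset.sum_singleton, pow_zero, one_smul]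
        have e3 : S 0 t₀ = 1 := rfl
        rw [e3, add_comm]
      have h5 : (fun n : ℕ => (p n) fun _ : Fin n => y) = fun n : ℕ => y ^ n • S n t₀ := by
        funext n
        rw [hp]
        simp only
        rw [ContinuousMultilinearMap.mkPiRing_apply]
        congr 1
        rw [Finset.prod_const, Finset.card_univ, Fintype.card_fin]
      rw [h5]
      exact h4
  have h1 := hball.factorial_smul (1 : ℝ) k
  rw [iteratedDeriv_eq_iteratedFDeriv, ← h1]
  have h2 : (p k fun _ : Fin k => (1:ℝ)) = S k t₀ := by
    rw [hp]; simp
  rw [h2]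
  exact (Nat.cast_smul_eq_nsmul ℝ _ _).symm

end Stmt16Aux

/-- Let `U_c` solve `U' = c G(t) U`, `U(0) = Id`, and let `D_k` satisfy the ODE
characterization `D_0 = Id`, `D_k(0) = 0`, `D_k' = G(t) D_{k-1}(t)` for `k ≥ 1`. Then each
`D_k` is the `k`-th Dyson term, i.e. the iterated simplex integral
`∫_0^t dt₁ ⋯ ∫_0^{t_{k-1}} dt_k G(t₁) ⋯ G(t_k)`; in particular `D_1(t) = ∫_0^t G(s) ds`;
and the `k`-th derivative of `U_c(t)` in `c` at `c = 0` equals `k! • D_k(t)`. -/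
theorem stmt16 {d : ℕ} (G : ℝ → Matrix (Fin d) (Fin d) ℂ) (hG : Continuous G)
    (U : ℝ → ℝ → Matrix (Fin d) (Fin d) ℂ)
    (hU : ∀ c t, HasDerivAt (U c) ((c • G t) * U c t) t)
    (hU0 : ∀ c, U c 0 = 1)
    (D : ℕ → ℝ → Matrix (Fin d) (Fin d) ℂ)
    (hD0 : ∀ t, D 0 t = 1)
    (hDinit : ∀ k, 1 ≤ k → D k 0 = 0)
    (hDderiv : ∀ k, 1 ≤ k → ∀ t, HasDerivAt (D k) (G t * D (k - 1) t) t) :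
    (∀ k t, D k t = simplexIntegral (List.replicate k G) t) ∧
    (∀ t, D 1 t = ∫ s in (0:ℝ)..t, G s) ∧
    (∀ k t, iteratedDeriv k (fun c => U c t) 0 = (k.factorial : ℝ) • D k t) := by
  have part1 : ∀ k t, D k t = simplexIntegral (List.replicate k G) t := by
    intro k
    induction k with
    | zero => intro t; rw [hD0 t]; rfl
    | succ k ih =>
      intro t
      have hD' : ∀ s, HasDerivAt (D (k + 1)) (G s * D k s) s := fun s =>
        hDderiv (k + 1) (Nat.le_add_left 1 k) s
      have hf : ∀ s, HasDerivAt
          (fun u => D (k + 1) u - simplexIntegral (List.replicate (k + 1) G) u) 0 s := by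
        intro s
        have h2 := (Stmt16Aux.simplex_cont_deriv hG k).2 s
        have h3 := (hD' s).sub h2
        rw [ih s, sub_self] at h3
        exact h3
      have hconst := is_const_of_deriv_eq_zero (𝕜 := ℝ)
        (f := fun u => D (k + 1) u - simplexIntegral (List.replicate (k + 1) G) u)
        (fun x => (hf x).differentiableAt) (fun x => (hf x).deriv) t 0
      have hzero : simplexIntegral (List.replicate (k + 1) G) 0 = 0 := by
        rw [List.replicate_succ, Stmt16Aux.simplexIntegral_cons, intervalIntegral.integral_same]
      simp only [hDinit (k + 1) (Nat.le_add_left 1 k), hzero, sub_zero, sub_self] at hconst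
      exact sub_eq_zero.mp hconst
  have part2 : ∀ t, D 1 t = ∫ s in (0:ℝ)..t, G s := by
    intro t
    rw [part1 1 t]
    have e : simplexIntegral (List.replicate 1 G) t
        = ∫ s in (0:ℝ)..t, G s * simplexIntegral ([] : List (ℝ → Matrix (Fin d) (Fin d) ℂ)) s :=
      rfl
    rw [e]
    simp only [Stmt16Aux.simplexIntegral_nil, mul_one]
  refine ⟨part1, part2, ?_⟩
  intro k t
  rw [part1 k t]
  exact Stmt16Aux.key hG U hU hU0 t k
end
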